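/- Let p ≥ 1, k ≥ 1, a₀ be natural numbers and set n = k·p + a₀. Then k + (k−1)·Σ_{μ⊨p into 2 positive parts} C(p,μ₁)·C(a₀,μ₂) + Σ_{d=2}^{k−1} C(k−1,d)·( Σ_{μ⊨p into d positive parts} C(p,μ₁)···C(p,μ_d) + Σ_{μ⊨p into d+1 positive parts} C(p,μ₁)···C(p,μ_d)·C(a₀,μ_{d+1}) ) = 1 + C(n−p, p). -/

import Mathlib

/-!
Generating functions: `posCompSum p r d` is the coefficient of `X ^ r` in `((1 + X) ^ p - 1) ^ d`,
and `posCompSum' p a₀ r d` the one in `((1 + X) ^ p - 1) ^ d * ((1 + X) ^ a₀ - 1)`. By the binomial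
theorem, `∑ⱼ C(m, j) ((1 + X) ^ p - 1) ^ j * (1 + ((1 + X) ^ a₀ - 1)) = (1 + X) ^ (m p + a₀)`.
Compare coefficients of `X ^ p` for `m = k - 1`: the term `j = 0` vanishes since `a₀ < p`, and
the term `j = 1` is `(k - 1) * (1 + posCompSum' p a₀ p 1)`.
-/

/-- Sum over compositions of `r` into `d` strictly positive parts of `∏ C(p, μᵢ)`. -/
def posCompSum (p r d : ℕ) : ℕ :=
  ∑ μ ∈ (Finset.Nat.antidiagonalTuple d r).filter (fun μ => ∀ i, 0 < μ i),
    ∏ i, p.choose (μ i)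

/-- Sum over compositions of `r` into `d+1` strictly positive parts of
`C(p,μ₁)⋯C(p,μ_d)·C(a₀,μ_{d+1})`. -/
def posCompSum' (p a₀ r d : ℕ) : ℕ :=
  ∑ μ ∈ (Finset.Nat.antidiagonalTuple (d + 1) r).filter (fun μ => ∀ i, 0 < μ i),
    (∏ i : Fin d, p.choose (μ i.castSucc)) * a₀.choose (μ (Fin.last d))


open Finset Finset.Nat Polynomial

lemma Finset.Nat.sum_antidiagonalTuple_succ {M : Type*} [AddCommMonoid M] (d r : ℕ)
    (f : (Fin (d + 1) → ℕ) → M) :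
    ∑ μ ∈ antidiagonalTuple (d + 1) r, f μ =
      ∑ ij ∈ antidiagonal r, ∑ ν ∈ antidiagonalTuple d ij.2, f (Fin.cons ij.1 ν) := by
  rw [sum_sigma']
  refine sum_nbij' (fun μ => ⟨(μ 0, ∑ i, Fin.tail μ i), Fin.tail μ⟩)
    (fun x => Fin.cons x.1.1 x.2) ?_ ?_ ?_ ?_ ?_
  · intro μ hμ
    rw [mem_antidiagonalTuple, Fin.sum_univ_succ] at hμ
    simpa [mem_antidiagonalTuple, Fin.tail] using hμ
  · rintro ⟨⟨a, b⟩, ν⟩ hx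
    simp only [mem_sigma, HasAntidiagonal.mem_antidiagonal, mem_antidiagonalTuple] at hx
    rw [mem_antidiagonalTuple, Fin.sum_cons, hx.2, hx.1]
  · intro μ _
    exact Fin.cons_self_tail μ
  · rintro ⟨⟨a, b⟩, ν⟩ hx
    simp only [mem_sigma, HasAntidiagonal.mem_antidiagonal, mem_antidiagonalTuple] at hx
    simp [hx.2]
  · intro μ _
    rw [Fin.cons_self_tail]

lemma Polynomial.coeff_prod_fin {R : Type*} [CommSemiring R] :
    ∀ {d : ℕ} (f : Fin d → R[X]) (r : ℕ),
      (∏ i, f i).coeff r = ∑ μ ∈ antidiagonalTuple d r, ∏ i, (f i).coeff (μ i)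
  | 0, f, 0 => by simp
  | 0, f, r + 1 => by simp [antidiagonalTuple_zero_succ, coeff_one]
  | d + 1, f, r => by
    simp only [Fin.prod_univ_succ, coeff_mul, sum_antidiagonalTuple_succ, Fin.cons_zero,
      Fin.cons_succ, coeff_prod_fin (fun i => f i.succ), mul_sum]

/-- `(1 + X) ^ p - 1`, written with `erase` since `ℕ[X]` has no subtraction. -/
noncomputable def binomialTail (p : ℕ) : ℕ[X] := ((1 + X) ^ p).erase 0

lemma coeff_binomialTail (p i : ℕ) :
    (binomialTail p).coeff i = if i = 0 then 0 else p.choose i := by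
  rw [binomialTail, coeff_erase, coeff_one_add_X_pow, Nat.cast_id]

lemma one_add_binomialTail (p : ℕ) : 1 + binomialTail p = (1 + X) ^ p := by
  have h := monomial_add_erase ((1 + X : ℕ[X]) ^ p) 0
  rwa [coeff_one_add_X_pow, Nat.choose_zero_right, Nat.cast_one, monomial_zero_one] at h

lemma sum_filter_pos_prod_choose_eq_coeff (d r : ℕ) (w : Fin d → ℕ) :
    ∑ μ ∈ (antidiagonalTuple d r).filter (fun μ => ∀ i, 0 < μ i), ∏ i, (w i).choose (μ i) =
      (∏ i, binomialTail (w i)).coeff r := by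
  rw [coeff_prod_fin, sum_filter]
  refine sum_congr rfl fun μ _ => ?_
  split_ifs with hμ
  · exact prod_congr rfl fun i _ => by rw [coeff_binomialTail, if_neg (hμ i).ne']
  · obtain ⟨i, hi⟩ := not_forall.mp hμ
    exact (prod_eq_zero (mem_univ i) (by rw [coeff_binomialTail, if_pos (by omega)])).symm

lemma posCompSum_eq_coeff (p r d : ℕ) : posCompSum p r d = (binomialTail p ^ d).coeff r := by
  rw [posCompSum, sum_filter_pos_prod_choose_eq_coeff d r (fun _ => p), prod_const, card_univ,
    Fintype.card_fin]

lemma posCompSum'_eq_coeff (p a r d : ℕ) :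
    posCompSum' p a r d = (binomialTail p ^ d * binomialTail a).coeff r := by
  have h := sum_filter_pos_prod_choose_eq_coeff (d + 1) r (Fin.snoc (fun _ => p) a)
  simp only [Fin.prod_univ_castSucc, Fin.snoc_castSucc, Fin.snoc_last, prod_const, card_univ,
    Fintype.card_fin] at h
  exact h

lemma sum_choose_mul_posCompSum_add_posCompSum' (p a m r : ℕ) :
    ∑ j ∈ range (m + 1), m.choose j * (posCompSum p r j + posCompSum' p a r j) =
      (m * p + a).choose r := by
  have key : ∑ j ∈ range (m + 1), (m.choose j : ℕ[X]) *
      (binomialTail p ^ j + binomialTail p ^ j * binomialTail a) = (1 + X) ^ (m * p + a) := by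
    calc _ = (binomialTail p + 1) ^ m * (1 + binomialTail a) := by
          rw [add_pow, sum_mul]
          exact sum_congr rfl fun j _ => by ring
      _ = _ := by rw [add_comm, one_add_binomialTail, one_add_binomialTail, pow_add, pow_mul']
  simpa [posCompSum_eq_coeff, posCompSum'_eq_coeff, finsetSum_coeff, coeff_one_add_X_pow]
    using congrArg (coeff · r) key

lemma sum_range_choose_mul_eq_add_sum_Icc (m : ℕ) (g : ℕ → ℕ) :
    ∑ j ∈ range (m + 1), m.choose j * g j = g 0 + m * g 1 + ∑ j ∈ Icc 2 m, m.choose j * g j := by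
  rcases m with _ | m
  · simp
  · rw [range_eq_Ico, sum_eq_sum_Ico_succ_bot (by omega), sum_eq_sum_Ico_succ_bot (by omega),
      Ico_add_one_right_eq_Icc]
    simp [add_assoc]

/-- Theorem A.8 of the paper (case `r = p`). -/
theorem gamma_case_r_eq_p (p k a₀ n : ℕ) (hp : 1 ≤ p) (hk : 1 ≤ k) (ha : a₀ < p)
    (hn : n = k * p + a₀) :
    k + (k - 1) * posCompSum' p a₀ p 1 +
        ∑ d ∈ Finset.Icc 2 (k - 1),
          (k - 1).choose d * (posCompSum p p d + posCompSum' p a₀ p d) =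
      1 + (n - p).choose p := by
  obtain ⟨m, rfl⟩ : ∃ m, k = m + 1 := ⟨k - 1, by omega⟩
  have hnp : n - p = m * p + a₀ := by rw [hn, add_mul, one_mul]; omega
  have hp0 : p ≠ 0 := by omega
  have hj0 : posCompSum p p 0 + posCompSum' p a₀ p 0 = 0 := by
    simp [posCompSum_eq_coeff, posCompSum'_eq_coeff, coeff_binomialTail, coeff_one, hp0,
      Nat.choose_eq_zero_of_lt ha]
  have hj1 : posCompSum p p 1 = 1 := by
    simp [posCompSum_eq_coeff, coeff_binomialTail, hp0]
  rw [hnp, ← sum_choose_mul_posCompSum_add_posCompSum', sum_range_choose_mul_eq_add_sum_Icc,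
    hj0, hj1, Nat.add_sub_cancel]
  ring
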